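/- Let σ ∈ L_wbal(φ, γ, N), set φ_n := φ(n), κ_n := log₂(2·φ(n)^{−1}·(1+φ(n)))/log₂((1−γ)^{−1}). Then for every n ≥ 1, E((1+φ(n))^{H_{n,σ}}) ≤ 2^N · n^{κ_n}. -/
import Mathlib

inductive BTree
  | leaf : BTree
  | node : BTree → BTree → BTree
deriving DecidableEq

def BTree.size : BTree → ℕ
  | .leaf => 1
  | .node l r => l.size + r.size

def BTree.height : BTree → ℕ
  | .leaf => 0
  | .node l r => 1 + max l.height r.height

noncomputable def Pσ (σ : ℕ → ℕ → ℝ) : BTree → ℝ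
  | .leaf => 1
  | .node l r => σ l.size r.size * Pσ σ l * Pσ σ r

def trees : ℕ → Finset BTree
  | 0 => ∅
  | 1 => {BTree.leaf}
  | (n+2) => (Finset.Ico 1 (n+2)).attach.biUnion
      (fun k => ((trees k.1) ×ˢ (trees (n+2-k.1))).image (fun p => BTree.node p.1 p.2))
  decreasing_by
  · exact (Finset.mem_Ico.mp k.2).2
  · have h := (Finset.mem_Ico.mp k.2).1; omega

noncomputable def expPow (σ : ℕ → ℕ → ℝ) (φ : ℝ) (n : ℕ) : ℝ :=
  ∑ t ∈ trees n, Pσ σ t * φ ^ t.height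

noncomputable def expH (σ : ℕ → ℕ → ℝ) (n : ℕ) : ℝ :=
  ∑ t ∈ trees n, Pσ σ t * (t.height : ℝ)

lemma size_of_mem_trees : ∀ m, ∀ t ∈ trees m, t.size = m := by
  intro m
  induction m using Nat.strong_induction_on with
  | _ m ih =>
    match m with
    | 0 => intro t ht; simp [trees] at ht
    | 1 => intro t ht; simp [trees] at ht; subst ht; rfl
    | (n+2) =>
      intro t ht
      rw [trees] at ht
      simp only [Finset.mem_biUnion, Finset.mem_image, Finset.mem_product, Finset.mem_attach] at ht
      obtain ⟨⟨k, hk⟩, -, ⟨l, r⟩, ⟨hl, hr⟩, rfl⟩ := ht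
      have hk' := Finset.mem_Ico.mp hk
      have h1 := ih k (by omega) l hl
      have h2 := ih (n+2-k) (by omega) r hr
      simp [BTree.size, h1, h2]; omega

lemma height_of_mem_trees : ∀ m, ∀ t ∈ trees m, t.height + 1 ≤ m := by
  intro m
  induction m using Nat.strong_induction_on with
  | _ m ih =>
    match m with
    | 0 => intro t ht; simp [trees] at ht
    | 1 => intro t ht; simp [trees] at ht; subst ht; simp [BTree.height]
    | (n+2) =>
      intro t ht
      rw [trees] at ht
      simp only [Finset.mem_biUnion, Finset.mem_image, Finset.mem_product, Finset.mem_attach] at ht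
      obtain ⟨⟨k, hk⟩, -, ⟨l, r⟩, ⟨hl, hr⟩, rfl⟩ := ht
      have hk' := Finset.mem_Ico.mp hk
      have h1 := ih k (by omega) l hl
      have h2 := ih (n+2-k) (by omega) r hr
      simp [BTree.height]; omega

lemma sum_trees_succ (f : BTree → ℝ) (n : ℕ) :
    ∑ t ∈ trees (n+2), f t =
      ∑ k ∈ Finset.Ico 1 (n+2), ∑ l ∈ trees k, ∑ r ∈ trees (n+2-k), f (BTree.node l r) := by
  rw [trees]
  rw [Finset.sum_biUnion]
  · rw [← Finset.sum_attach (Finset.Ico 1 (n+2))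
      (fun k => ∑ l ∈ trees k, ∑ r ∈ trees (n+2-k), f (BTree.node l r))]
    refine Finset.sum_congr rfl fun k _ => ?_
    rw [Finset.sum_image, Finset.sum_product]
    rintro ⟨a,b⟩ - ⟨c,d⟩ - hpq
    injection hpq with h1 h2
    exact Prod.ext h1 h2
  · intro a _ b _ hab
    simp only [Finset.disjoint_left, Finset.mem_image, Finset.mem_product]
    rintro t ⟨⟨l, r⟩, ⟨hl, -⟩, rfl⟩ ⟨⟨l', r'⟩, ⟨hl', -⟩, h⟩
    cases h
    exact hab (Subtype.ext ((size_of_mem_trees _ _ hl).symm.trans (size_of_mem_trees _ _ hl')))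

lemma Pσ_nonneg (σ : ℕ → ℕ → ℝ) (hσ : ∀ i j, 0 ≤ σ i j) : ∀ t, 0 ≤ Pσ σ t := by
  intro t
  induction t with
  | leaf => simp [Pσ]
  | node l r hl hr => exact mul_nonneg (mul_nonneg (hσ _ _) hl) hr

lemma mass_trees (σ : ℕ → ℕ → ℝ)
    (hsum : ∀ k, 2 ≤ k → ∑ i ∈ Finset.Ico 1 k, σ i (k - i) = 1) :
    ∀ m, 1 ≤ m → ∑ t ∈ trees m, Pσ σ t = 1 := by
  intro m
  induction m using Nat.strong_induction_on with
  | _ m ih =>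
    match m with
    | 0 => intro h; omega
    | 1 => intro _; simp [trees, Pσ]
    | (n+2) =>
      intro _
      rw [sum_trees_succ]
      have : ∀ k ∈ Finset.Ico 1 (n+2),
          (∑ l ∈ trees k, ∑ r ∈ trees (n+2-k), Pσ σ (BTree.node l r)) = σ k (n+2-k) := by
        intro k hk
        have hk' := Finset.mem_Ico.mp hk
        have hl1 : ∑ l ∈ trees k, Pσ σ l = 1 := ih k (by omega) (by omega)
        have hr1 : ∑ r ∈ trees (n+2-k), Pσ σ r = 1 := ih (n+2-k) (by omega) (by omega)
        calc ∑ l ∈ trees k, ∑ r ∈ trees (n+2-k), Pσ σ (BTree.node l r)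
            = ∑ l ∈ trees k, ∑ r ∈ trees (n+2-k), σ k (n+2-k) * Pσ σ l * Pσ σ r := by
              refine Finset.sum_congr rfl fun l hl => Finset.sum_congr rfl fun r hr => ?_
              rw [Pσ, size_of_mem_trees _ _ hl, size_of_mem_trees _ _ hr]
          _ = σ k (n+2-k) := by
              simp only [← Finset.sum_mul, ← Finset.mul_sum, mul_assoc]
              rw [hl1, hr1]; ring
      rw [Finset.sum_congr rfl this]
      exact hsum (n+2) (by omega)

lemma key_facts (ε γ : ℝ) (hε0 : 0 < ε) (hε1 : ε ≤ 1) (hγ0 : 0 < γ) (hγ : γ < 1/2) :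
    1 ≤ Real.logb 2 (2*ε⁻¹*(1+ε)) / Real.logb 2 (1-γ)⁻¹ ∧
    (1+ε) * (1-γ) ^ (Real.logb 2 (2*ε⁻¹*(1+ε)) / Real.logb 2 (1-γ)⁻¹ - 1) ≤ ε := by
  set r := Real.logb 2 (2*ε⁻¹*(1+ε)) / Real.logb 2 (1-γ)⁻¹ with hr
  have hγ1 : (0:ℝ) < 1 - γ := by linarith
  have hγ2 : 1 - γ < 1 := by linarith
  have hγhalf : (1:ℝ)/2 < 1 - γ := by linarith
  have hinv1 : 1 < (1-γ)⁻¹ := (one_lt_inv_iff₀).mpr ⟨hγ1, hγ2⟩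
  have hinv2 : (1-γ)⁻¹ < 2 := by
    rw [inv_lt_iff_one_lt_mul₀ hγ1]; linarith
  have hx : (2:ℝ) ≤ 2*ε⁻¹*(1+ε) := by
    have h1 : (1:ℝ) ≤ ε⁻¹ := (one_le_inv_iff₀).mpr ⟨hε0, hε1⟩
    nlinarith
  have hxpos : (0:ℝ) < 2*ε⁻¹*(1+ε) := by linarith
  have hden_pos : 0 < Real.log (1-γ)⁻¹ := Real.log_pos hinv1
  have hden_le : Real.log (1-γ)⁻¹ ≤ Real.log (2*ε⁻¹*(1+ε)) :=
    Real.log_le_log (by linarith) (le_trans (le_of_lt hinv2) hx)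
  have hlog2 : Real.log 2 ≠ 0 := by
    have := Real.log_pos (by norm_num : (1:ℝ) < 2); linarith
  have hreq : r = Real.log (2*ε⁻¹*(1+ε)) / Real.log (1-γ)⁻¹ := by
    rw [hr]; unfold Real.logb; field_simp
  have hr1 : 1 ≤ r := by
    rw [hreq, le_div_iff₀ hden_pos, one_mul]; exact hden_le
  refine ⟨hr1, ?_⟩
  have hlogne : Real.log (1-γ) ≠ 0 := by
    have : Real.log (1-γ) < 0 := Real.log_neg hγ1 hγ2
    linarith
  have harg : Real.log (1-γ) * r = -Real.log (2*ε⁻¹*(1+ε)) := by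
    rw [hreq, Real.log_inv]
    field_simp [hlogne]
    all_goals ring
  have hkey : (1-γ) ^ r = ε / (2*(1+ε)) := by
    rw [Real.rpow_def_of_pos hγ1, harg, Real.exp_neg, Real.exp_log hxpos,
      mul_inv, mul_inv, inv_inv]
    field_simp
    all_goals ring
  have hsub : (1-γ) ^ (r - 1) = (1-γ) ^ r / (1-γ) := by
    rw [Real.rpow_sub hγ1, Real.rpow_one]
  rw [hsub, hkey]
  rw [div_div, mul_div, div_le_iff₀ (by positivity)]
  nlinarith [mul_nonneg (mul_nonneg hε0.le (by linarith : (0:ℝ) ≤ 1+ε))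
    (by linarith : (0:ℝ) ≤ 1 - 2*γ)]

lemma split_rpow (r M K K' : ℝ) (hr : 1 ≤ r) (hK : 1 ≤ K) (hK' : 1 ≤ K')
    (hKK : K + K' = M) (b : ℝ) (hb : 0 < b) (hKb : K ≤ b) (hK'b : K' ≤ b) :
    K ^ r + K' ^ r ≤ M * b ^ (r - 1) := by
  have h1 : ∀ X : ℝ, 1 ≤ X → X ≤ b → X ^ r ≤ X * b ^ (r-1) := by
    intro X hX1 hXb
    have hXr : X ^ r = X * X ^ (r-1) := by
      have h := Real.rpow_add (show (0:ℝ) < X by linarith) 1 (r-1)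
      rw [show (1:ℝ)+(r-1) = r by ring, Real.rpow_one] at h
      exact h
    rw [hXr]
    exact mul_le_mul_of_nonneg_left
      (Real.rpow_le_rpow (by linarith) hXb (by linarith)) (by linarith)
  calc K ^ r + K' ^ r ≤ K * b ^ (r-1) + K' * b ^ (r-1) :=
        add_le_add (h1 K hK hKb) (h1 K' hK' hK'b)
    _ = M * b ^ (r-1) := by rw [← add_mul, hKK]

theorem weakly_balanced_exp_bound (σ : ℕ → ℕ → ℝ)
    (hrange : ∀ i j, 0 ≤ σ i j ∧ σ i j ≤ 1)
    (hsum : ∀ k, 2 ≤ k → ∑ i ∈ Finset.Ico 1 k, σ i (k - i) = 1)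
    (φ : ℕ → ℝ) (hφdec : Antitone φ) (hφrange : ∀ n, 0 < φ n ∧ φ n ≤ 1)
    (γ : ℝ) (hγ0 : 0 < γ) (hγ : γ < 1 / 2) (N : ℕ)
    (hbal : ∀ n : ℕ, N ≤ n →
      φ n ≤ ∑ k ∈ (Finset.Ico 1 n).filter
        (fun k : ℕ => γ * (n : ℝ) ≤ (k : ℝ) ∧ (k : ℝ) ≤ (1 - γ) * (n : ℝ)), σ k (n - k)) :
    ∀ n : ℕ, 1 ≤ n →
      expPow σ (1 + φ n) n ≤
        2 ^ N * (n : ℝ) ^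
          (Real.logb 2 (2 * (φ n)⁻¹ * (1 + φ n)) / Real.logb 2 (1 - γ)⁻¹) := by
  intro n hn1
  have hσ0 : ∀ i j, 0 ≤ σ i j := fun i j => (hrange i j).1
  have hε0 : 0 < φ n := (hφrange n).1
  have hε1 : φ n ≤ 1 := (hφrange n).2
  obtain ⟨hr1, hcoef⟩ := key_facts (φ n) γ hε0 hε1 hγ0 hγ
  set ε := φ n with hεdef
  set c := 1 + ε with hcdef
  set r := Real.logb 2 (2 * ε⁻¹ * c) / Real.logb 2 (1 - γ)⁻¹ with hrdef
  have hc1 : (1:ℝ) ≤ c := by rw [hcdef]; linarith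
  have hc2 : c ≤ 2 := by rw [hcdef]; linarith
  have hc0 : (0:ℝ) ≤ c := by linarith
  have hr0 : (0:ℝ) ≤ r := by linarith
  have hγ1 : (0:ℝ) < 1 - γ := by linarith
  suffices H : ∀ m : ℕ, m ≤ n → 1 ≤ m → expPow σ c m ≤ 2 ^ N * (m:ℝ) ^ r from H n le_rfl hn1
  intro m
  induction m using Nat.strong_induction_on with
  | _ m ih =>
    intro hmn hm1
    have hm1R : (1:ℝ) ≤ (m:ℝ) := by exact_mod_cast hm1
    have hmr1 : (1:ℝ) ≤ (m:ℝ) ^ r := Real.one_le_rpow hm1R hr0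
    by_cases hbase : m = 1 ∨ m < N
    · -- base case
      have hb : ∀ t ∈ trees m, Pσ σ t * c ^ t.height ≤ Pσ σ t * 2 ^ N := by
        intro t ht
        refine mul_le_mul_of_nonneg_left ?_ (Pσ_nonneg σ hσ0 t)
        calc c ^ t.height ≤ 2 ^ t.height := pow_le_pow_left₀ hc0 hc2 _
          _ ≤ (2:ℝ) ^ N := by
              apply pow_le_pow_right₀ one_le_two
              have := height_of_mem_trees m t ht
              omega
      calc expPow σ c m ≤ ∑ t ∈ trees m, Pσ σ t * 2 ^ N := by
            simp only [expPow]; exact Finset.sum_le_sum hb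
        _ = 2 ^ N := by rw [← Finset.sum_mul, mass_trees σ hsum m hm1, one_mul]
        _ ≤ 2 ^ N * (m:ℝ) ^ r := le_mul_of_one_le_right (by positivity) hmr1
    · push_neg at hbase
      obtain ⟨hmne1, hNm⟩ := hbase
      have hm2 : 2 ≤ m := by omega
      obtain ⟨j, rfl⟩ : ∃ j, m = j + 2 := ⟨m - 2, by omega⟩
      -- Step 1: recurrence inequality
      have key1 : expPow σ c (j+2) ≤ ∑ k ∈ Finset.Ico 1 (j+2),
          σ k (j+2-k) * c * (expPow σ c k + expPow σ c (j+2-k)) := by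
        simp only [expPow]
        rw [sum_trees_succ (fun t => Pσ σ t * c ^ t.height) j]
        apply Finset.sum_le_sum
        intro k hk
        have hk' := Finset.mem_Ico.mp hk
        have hmass_l : ∑ l ∈ trees k, Pσ σ l = 1 := mass_trees σ hsum _ (by omega)
        have hmass_r : ∑ x ∈ trees (j+2-k), Pσ σ x = 1 := mass_trees σ hsum _ (by omega)
        have step1 : ∀ l ∈ trees k, ∀ x ∈ trees (j+2-k),
            Pσ σ (BTree.node l x) * c ^ (BTree.node l x).height ≤
            σ k (j+2-k) * c * (Pσ σ l * Pσ σ x * c ^ l.height +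
              Pσ σ l * Pσ σ x * c ^ x.height) := by
          intro l hl x hx
          have hPl := Pσ_nonneg σ hσ0 l
          have hPx := Pσ_nonneg σ hσ0 x
          have hh : (BTree.node l x).height = 1 + max l.height x.height := rfl
          have hP : Pσ σ (BTree.node l x) = σ k (j+2-k) * Pσ σ l * Pσ σ x := by
            rw [Pσ, size_of_mem_trees _ _ hl, size_of_mem_trees _ _ hx]
          rw [hP, hh, pow_add, pow_one]
          have h2 : Pσ σ l * Pσ σ x * c ^ (max l.height x.height) ≤
              Pσ σ l * Pσ σ x * c ^ l.height + Pσ σ l * Pσ σ x * c ^ x.height := by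
            rcases le_total l.height x.height with h | h
            · rw [max_eq_right h]
              exact le_add_of_nonneg_left
                (mul_nonneg (mul_nonneg hPl hPx) (pow_nonneg hc0 _))
            · rw [max_eq_left h]
              exact le_add_of_nonneg_right
                (mul_nonneg (mul_nonneg hPl hPx) (pow_nonneg hc0 _))
          calc σ k (j+2-k) * Pσ σ l * Pσ σ x * (c * c ^ (max l.height x.height))
              = σ k (j+2-k) * c * (Pσ σ l * Pσ σ x * c ^ (max l.height x.height)) := by
                ring
            _ ≤ _ := mul_le_mul_of_nonneg_left h2
                (mul_nonneg (hσ0 _ _) hc0)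
        have e1 : ∑ l ∈ trees k, ∑ x ∈ trees (j+2-k),
            Pσ σ l * Pσ σ x * c ^ l.height = expPow σ c k := by
          simp only [expPow]
          refine Finset.sum_congr rfl fun l _ => ?_
          calc ∑ x ∈ trees (j+2-k), Pσ σ l * Pσ σ x * c ^ l.height
              = (Pσ σ l * c ^ l.height) * ∑ x ∈ trees (j+2-k), Pσ σ x := by
                rw [Finset.mul_sum]
                exact Finset.sum_congr rfl fun x _ => by ring
            _ = Pσ σ l * c ^ l.height := by rw [hmass_r, mul_one]
        have e2 : ∑ l ∈ trees k, ∑ x ∈ trees (j+2-k),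
            Pσ σ l * Pσ σ x * c ^ x.height = expPow σ c (j+2-k) := by
          simp only [expPow]
          rw [Finset.sum_comm]
          refine Finset.sum_congr rfl fun x _ => ?_
          calc ∑ l ∈ trees k, Pσ σ l * Pσ σ x * c ^ x.height
              = (Pσ σ x * c ^ x.height) * ∑ l ∈ trees k, Pσ σ l := by
                rw [Finset.mul_sum]
                exact Finset.sum_congr rfl fun l _ => by ring
            _ = Pσ σ x * c ^ x.height := by rw [hmass_l, mul_one]
        calc ∑ l ∈ trees k, ∑ x ∈ trees (j+2-k),
              Pσ σ (BTree.node l x) * c ^ (BTree.node l x).height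
            ≤ ∑ l ∈ trees k, ∑ x ∈ trees (j+2-k),
              σ k (j+2-k) * c * (Pσ σ l * Pσ σ x * c ^ l.height +
                Pσ σ l * Pσ σ x * c ^ x.height) :=
              Finset.sum_le_sum fun l hl => Finset.sum_le_sum fun x hx => step1 l hl x hx
          _ = σ k (j+2-k) * c * (expPow σ c k + expPow σ c (j+2-k)) := by
              rw [← e1, ← e2, ← Finset.sum_add_distrib, Finset.mul_sum]
              refine Finset.sum_congr rfl fun l _ => ?_
              rw [← Finset.sum_add_distrib, Finset.mul_sum]
      -- Step 2: apply IH and split into balanced/unbalanced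
      set M : ℝ := ((j:ℝ) + 2) with hMdef
      have hMcast : ((j+2 : ℕ) : ℝ) = M := by push_cast; ring
      have hM1 : (1:ℝ) ≤ M := by
        have : (0:ℝ) ≤ (j:ℝ) := Nat.cast_nonneg j
        rw [hMdef]; linarith
      have hM0 : (0:ℝ) < M := by linarith
      have hMr0 : (0:ℝ) ≤ M ^ r := Real.rpow_nonneg (by linarith) r
      have hMM : M ^ r = M * M ^ (r-1) := by
        have h := Real.rpow_add hM0 1 (r-1)
        rw [show (1:ℝ)+(r-1) = r by ring, Real.rpow_one] at h
        exact h
      have hIH : ∀ k ∈ Finset.Ico 1 (j+2),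
          σ k (j+2-k) * c * (expPow σ c k + expPow σ c (j+2-k)) ≤
          σ k (j+2-k) * c * (2 ^ N * ((k:ℝ) ^ r + ((j+2-k : ℕ):ℝ) ^ r)) := by
        intro k hk
        have hk' := Finset.mem_Ico.mp hk
        have h1 : expPow σ c k ≤ 2 ^ N * (k:ℝ) ^ r :=
          ih k (by omega) (by omega) (by omega)
        have h2 : expPow σ c (j+2-k) ≤ 2 ^ N * ((j+2-k : ℕ):ℝ) ^ r :=
          ih (j+2-k) (by omega) (by omega) (by omega)
        refine mul_le_mul_of_nonneg_left ?_ (mul_nonneg (hσ0 _ _) hc0)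
        rw [mul_add]
        exact add_le_add h1 h2
      -- rpow bounds on k^r + (m-k)^r
      have hcast : ∀ k ∈ Finset.Ico 1 (j+2),
          ((k:ℝ) ^ r + ((j+2-k : ℕ):ℝ) ^ r) ≤ M * M ^ (r-1) ∧
          (γ * M ≤ (k:ℝ) → (k:ℝ) ≤ (1-γ) * M →
            ((k:ℝ) ^ r + ((j+2-k : ℕ):ℝ) ^ r) ≤ M * ((1-γ) * M) ^ (r-1)) := by
        intro k hk
        have hk' := Finset.mem_Ico.mp hk
        have hK1 : (1:ℝ) ≤ (k:ℝ) := by exact_mod_cast hk'.1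
        have hK'c : ((j+2-k : ℕ):ℝ) = M - (k:ℝ) := by
          rw [Nat.cast_sub (by omega : k ≤ j+2), hMcast]
        have hK'1 : (1:ℝ) ≤ ((j+2-k : ℕ):ℝ) := by
          have : 1 ≤ j+2-k := by omega
          exact_mod_cast this
        have hKK : (k:ℝ) + ((j+2-k : ℕ):ℝ) = M := by rw [hK'c]; ring
        have hKM : (k:ℝ) ≤ M := by rw [← hKK]; linarith
        have hK'M : ((j+2-k : ℕ):ℝ) ≤ M := by rw [← hKK]; linarith
        constructor
        · exact split_rpow r M _ _ hr1 hK1 hK'1 hKK M hM0 hKM hK'M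
        · intro hγlo hγhi
          refine split_rpow r M _ _ hr1 hK1 hK'1 hKK ((1-γ)*M) (by positivity) hγhi ?_
          rw [hK'c]
          nlinarith
      -- sum split
      have hPQ : (∑ k ∈ (Finset.Ico 1 (j+2)).filter (fun k : ℕ => γ * ((j+2:ℕ) : ℝ) ≤ (k : ℝ) ∧ (k : ℝ) ≤ (1 - γ) * ((j+2:ℕ) : ℝ)), σ k (j+2-k)) +
          (∑ k ∈ (Finset.Ico 1 (j+2)).filter (fun k : ℕ => ¬ (γ * ((j+2:ℕ) : ℝ) ≤ (k : ℝ) ∧ (k : ℝ) ≤ (1 - γ) * ((j+2:ℕ) : ℝ))), σ k (j+2-k)) = 1 := by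
        rw [Finset.sum_filter_add_sum_filter_not]
        exact hsum (j+2) (by omega)
      set P := ∑ k ∈ (Finset.Ico 1 (j+2)).filter (fun k : ℕ => γ * ((j+2:ℕ) : ℝ) ≤ (k : ℝ) ∧ (k : ℝ) ≤ (1 - γ) * ((j+2:ℕ) : ℝ)), σ k (j+2-k) with hPdef
      set Q := ∑ k ∈ (Finset.Ico 1 (j+2)).filter (fun k : ℕ => ¬ (γ * ((j+2:ℕ) : ℝ) ≤ (k : ℝ) ∧ (k : ℝ) ≤ (1 - γ) * ((j+2:ℕ) : ℝ))), σ k (j+2-k) with hQdef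
      have hP0 : 0 ≤ P := Finset.sum_nonneg fun k _ => hσ0 _ _
      have hQ0 : 0 ≤ Q := Finset.sum_nonneg fun k _ => hσ0 _ _
      have hεP : ε ≤ P := by
        have h := hbal (j+2) hNm
        have hφm : ε ≤ φ (j+2) := hφdec hmn
        exact le_trans hφm h
      set G : ℝ := (1-γ) ^ (r-1) with hGdef
      have hG0 : 0 ≤ G := Real.rpow_nonneg (by linarith) _
      have hGbal : M * ((1-γ) * M) ^ (r-1) = G * M ^ r := by
        rw [Real.mul_rpow (by linarith) (by linarith), hGdef, hMM]
        ring
      -- bound the sum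
      have key2 : ∑ k ∈ Finset.Ico 1 (j+2),
          σ k (j+2-k) * c * (2 ^ N * ((k:ℝ) ^ r + ((j+2-k : ℕ):ℝ) ^ r)) ≤
          P * (c * (2 ^ N * (G * M ^ r))) + Q * (c * (2 ^ N * M ^ r)) := by
        rw [← Finset.sum_filter_add_sum_filter_not (Finset.Ico 1 (j+2)) (fun k : ℕ => γ * ((j+2:ℕ) : ℝ) ≤ (k : ℝ) ∧ (k : ℝ) ≤ (1 - γ) * ((j+2:ℕ) : ℝ))]
        have hb1 : ∀ k ∈ (Finset.Ico 1 (j+2)).filter (fun k : ℕ => γ * ((j+2:ℕ) : ℝ) ≤ (k : ℝ) ∧ (k : ℝ) ≤ (1 - γ) * ((j+2:ℕ) : ℝ)),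
            σ k (j+2-k) * c * (2 ^ N * ((k:ℝ) ^ r + ((j+2-k : ℕ):ℝ) ^ r)) ≤
            σ k (j+2-k) * (c * (2 ^ N * (G * M ^ r))) := by
          intro k hk
          rw [Finset.mem_filter] at hk
          obtain ⟨hk, hplo, hphi⟩ := hk
          have := ((hcast k hk).2 (by rw [hMcast] at hplo; exact hplo)
            (by rw [hMcast] at hphi; exact hphi))
          rw [hGbal] at this
          rw [mul_assoc]
          refine mul_le_mul_of_nonneg_left ?_ (hσ0 _ _)
          refine mul_le_mul_of_nonneg_left ?_ hc0
          refine mul_le_mul_of_nonneg_left this (by positivity)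
        have hb2 : ∀ k ∈ (Finset.Ico 1 (j+2)).filter (fun k : ℕ => ¬ (γ * ((j+2:ℕ) : ℝ) ≤ (k : ℝ) ∧ (k : ℝ) ≤ (1 - γ) * ((j+2:ℕ) : ℝ))),
            σ k (j+2-k) * c * (2 ^ N * ((k:ℝ) ^ r + ((j+2-k : ℕ):ℝ) ^ r)) ≤
            σ k (j+2-k) * (c * (2 ^ N * M ^ r)) := by
          intro k hk
          rw [Finset.mem_filter] at hk
          have := (hcast k hk.1).1
          rw [← hMM] at this
          rw [mul_assoc]
          refine mul_le_mul_of_nonneg_left ?_ (hσ0 _ _)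
          refine mul_le_mul_of_nonneg_left ?_ hc0
          refine mul_le_mul_of_nonneg_left this (by positivity)
        refine add_le_add ?_ ?_
        · calc _ ≤ ∑ k ∈ (Finset.Ico 1 (j+2)).filter (fun k : ℕ => γ * ((j+2:ℕ) : ℝ) ≤ (k : ℝ) ∧ (k : ℝ) ≤ (1 - γ) * ((j+2:ℕ) : ℝ)),
                σ k (j+2-k) * (c * (2 ^ N * (G * M ^ r))) := Finset.sum_le_sum hb1
            _ = P * (c * (2 ^ N * (G * M ^ r))) := by rw [hPdef, Finset.sum_mul]
        · calc _ ≤ ∑ k ∈ (Finset.Ico 1 (j+2)).filter (fun k : ℕ => ¬ (γ * ((j+2:ℕ) : ℝ) ≤ (k : ℝ) ∧ (k : ℝ) ≤ (1 - γ) * ((j+2:ℕ) : ℝ))),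
                σ k (j+2-k) * (c * (2 ^ N * M ^ r)) := Finset.sum_le_sum hb2
            _ = Q * (c * (2 ^ N * M ^ r)) := by rw [hQdef, Finset.sum_mul]
      -- final scalar inequality
      have hfin : P * (c * (2 ^ N * (G * M ^ r))) + Q * (c * (2 ^ N * M ^ r)) ≤
          2 ^ N * M ^ r := by
        set T := (2:ℝ) ^ N * M ^ r with hTdef
        have hT0 : (0:ℝ) ≤ T := by rw [hTdef]; positivity
        have h1 : P * (c * G) ≤ P * ε := mul_le_mul_of_nonneg_left hcoef hP0
        have e1' : P * (c * (G * T)) ≤ (P * ε) * T := by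
          calc P * (c * (G * T)) = (P * (c * G)) * T := by ring
            _ ≤ (P * ε) * T := mul_le_mul_of_nonneg_right h1 hT0
        have e2' : Q * (c * T) = Q * T + (Q * ε) * T := by rw [hcdef]; ring
        have e3 : (P * ε) * T + (Q * ε) * T = ε * T := by
          rw [← add_mul, ← add_mul, hPQ, one_mul]
        have e4 : ε * T ≤ P * T := mul_le_mul_of_nonneg_right hεP hT0
        have e5 : P * T + Q * T = T := by rw [← add_mul, hPQ, one_mul]
        have egoal : P * (c * (2 ^ N * (G * M ^ r))) = P * (c * (G * T)) := by
          rw [hTdef]; ring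
        linarith
      calc expPow σ c (j+2) ≤ _ := key1
        _ ≤ ∑ k ∈ Finset.Ico 1 (j+2),
              σ k (j+2-k) * c * (2 ^ N * ((k:ℝ) ^ r + ((j+2-k : ℕ):ℝ) ^ r)) :=
            Finset.sum_le_sum hIH
        _ ≤ P * (c * (2 ^ N * (G * M ^ r))) + Q * (c * (2 ^ N * M ^ r)) := key2
        _ ≤ 2 ^ N * M ^ r := hfin
        _ = 2 ^ N * ((j+2 : ℕ):ℝ) ^ r := by rw [hMcast]
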